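/- Let m > 0 and D, D̄, Δ be the operators D = 4 ∂_t ∂_τ + ∂_v² − ∂_u², D̄ = 2 ∂_t D_{τ̄} + ∂_{v̄}², Δ = 2a ∂_t ∂_{v̄} − ∂_v ∂_{v̄}, where D_{τ̄} = ∂_{τ̄} + a ∂_{v̄} and a = (v−v̄)/(τ−τ̄). Then on the space of functions F of degree m (i.e. F(τ,u,v,t) = e^{2πimt} F(τ,u,v,0)), one has [Δ, D] = (8πim/(τ−τ̄)) Δ. -/

import Mathlib

open Complex ContDiff

noncomputable def πc : ℂ := Real.pi

/-- Holomorphic Wirtinger derivative `∂f/∂z`. -/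
noncomputable def wd (f : ℂ → ℂ) (z : ℂ) : ℂ :=
  (fderiv ℝ f z 1 - Complex.I * fderiv ℝ f z Complex.I) / 2

/-- Antiholomorphic Wirtinger derivative `∂f/∂z̄`. -/
noncomputable def wdb (f : ℂ → ℂ) (z : ℂ) : ℂ :=
  (fderiv ℝ f z 1 + Complex.I * fderiv ℝ f z Complex.I) / 2

/-- The operator `D = 4 ∂_t ∂_τ + ∂_v² − ∂_u²` on functions `F(τ,u,v,t)`. -/
noncomputable def Dop (F : ℂ → ℂ → ℂ → ℂ → ℂ) : ℂ → ℂ → ℂ → ℂ → ℂ := fun τ u v t =>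
  4 * wd (fun t' => wd (fun τ' => F τ' u v t') τ) t +
    wd (fun v' => wd (fun v'' => F τ u v'' t) v') v -
    wd (fun u' => wd (fun u'' => F τ u'' v t) u') u

/-- The operator `Δ = 2a ∂_t ∂_{v̄} − ∂_v ∂_{v̄}` with `a = (v−v̄)/(τ−τ̄)`. -/
noncomputable def DeltaOp (F : ℂ → ℂ → ℂ → ℂ → ℂ) : ℂ → ℂ → ℂ → ℂ → ℂ := fun τ u v t =>
  2 * ((v - (starRingEnd ℂ) v) / (τ - (starRingEnd ℂ) τ)) *
      wd (fun t' => wdb (fun v' => F τ u v' t') v) t -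
    wd (fun v' => wdb (fun v'' => F τ u v'' t) v') v

/-- Wirtinger-type derivative of a 3-variable function along complex direction `e`,
with sign `ε` (`ε = -I` for holomorphic, `ε = I` for antiholomorphic). -/
noncomputable def Wg (e : ℂ × ℂ × ℂ) (ε : ℂ) (f : ℂ × ℂ × ℂ → ℂ) : ℂ × ℂ × ℂ → ℂ :=
  fun x => (fderiv ℝ f x e + ε * fderiv ℝ f x (I • e)) / 2

noncomputable def Wt : (ℂ × ℂ × ℂ → ℂ) → ℂ × ℂ × ℂ → ℂ := Wg (1,0,0) (-I)
noncomputable def Wu : (ℂ × ℂ × ℂ → ℂ) → ℂ × ℂ × ℂ → ℂ := Wg (0,1,0) (-I)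
noncomputable def Wv : (ℂ × ℂ × ℂ → ℂ) → ℂ × ℂ × ℂ → ℂ := Wg (0,0,1) (-I)
noncomputable def Wvb : (ℂ × ℂ × ℂ → ℂ) → ℂ × ℂ × ℂ → ℂ := Wg (0,0,1) I

variable {s : Set (ℂ × ℂ × ℂ)} {f f₁ f₂ : ℂ × ℂ × ℂ → ℂ} {x : ℂ × ℂ × ℂ}

-- basic wd lemmas
lemma wd_congr {f g : ℂ → ℂ} {z : ℂ} (h : f =ᶠ[nhds z] g) : wd f z = wd g z := by
  unfold wd; rw [h.fderiv_eq]

lemma wdb_congr {f g : ℂ → ℂ} {z : ℂ} (h : f =ᶠ[nhds z] g) : wdb f z = wdb g z := by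
  unfold wdb; rw [h.fderiv_eq]

lemma wd_const_mul {f : ℂ → ℂ} {z : ℂ} (hf : DifferentiableAt ℝ f z) (C : ℂ) :
    wd (fun z' => C * f z') z = C * wd f z := by
  unfold wd; rw [fderiv_const_mul hf C]; simp; ring

lemma wdb_const_mul {f : ℂ → ℂ} {z : ℂ} (hf : DifferentiableAt ℝ f z) (C : ℂ) :
    wdb (fun z' => C * f z') z = C * wdb f z := by
  unfold wdb; rw [fderiv_const_mul hf C]; simp; ring

lemma wd_of_hasDerivAt {f : ℂ → ℂ} {d z : ℂ} (h : HasDerivAt f d z) : wd f z = d := by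
  have h' := (h.hasFDerivAt.restrictScalars ℝ).fderiv
  unfold wd; rw [h']; simp [ContinuousLinearMap.smulRight_apply]
  have : I * (I * d) = -d := by rw [← mul_assoc, I_mul_I]; ring
  rw [this]; ring

lemma wd_exp_mul (c A t : ℂ) : wd (fun t' => Complex.exp (c * t') * A) t
    = c * (Complex.exp (c * t) * A) := by
  have h : HasDerivAt (fun t' => Complex.exp (c * t') * A)
      (Complex.exp (c * t) * c * A) t := by
    simpa using (((hasDerivAt_id t).const_mul c).cexp).mul_const A
  rw [wd_of_hasDerivAt h]; ring

-- smoothness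
lemma fderiv_apply_contDiffOn (hs : IsOpen s) (hf : ContDiffOn ℝ ∞ f s) (w : ℂ × ℂ × ℂ) :
    ContDiffOn ℝ ∞ (fun x => fderiv ℝ f x w) s := by
  intro x hx
  have h := ((hf.contDiffAt (hs.mem_nhds hx)).fderiv_right (m := ∞)
    (by norm_num)).clm_apply (contDiffAt_const (c := w))
  exact h.contDiffWithinAt

lemma Wg_contDiffOn (hs : IsOpen s) (hf : ContDiffOn ℝ ∞ f s) (e : ℂ × ℂ × ℂ) (ε : ℂ) :
    ContDiffOn ℝ ∞ (Wg e ε f) s :=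
  ((fderiv_apply_contDiffOn hs hf e).add
    (contDiffOn_const.mul (fderiv_apply_contDiffOn hs hf (I • e)))).div_const 2

lemma fderiv_apply_differentiableAt (hs : IsOpen s) (hf : ContDiffOn ℝ ∞ f s) (hx : x ∈ s)
    (w : ℂ × ℂ × ℂ) : DifferentiableAt ℝ (fun y => fderiv ℝ f y w) x :=
  (((fderiv_apply_contDiffOn hs hf w).contDiffAt (hs.mem_nhds hx)).differentiableAt (by norm_num))

lemma fderiv_fderiv_comm (hs : IsOpen s) (hf : ContDiffOn ℝ ∞ f s) (hx : x ∈ s)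
    (w w' : ℂ × ℂ × ℂ) :
    fderiv ℝ (fun y => fderiv ℝ f y w) x w' = fderiv ℝ (fun y => fderiv ℝ f y w') x w := by
  have hdf : ContDiffAt ℝ ∞ (fderiv ℝ f) x :=
    (hf.contDiffAt (hs.mem_nhds hx)).fderiv_right (by norm_num)
  have hdd : DifferentiableAt ℝ (fderiv ℝ f) x := hdf.differentiableAt (by norm_num)
  have h1 : ∀ᶠ y in nhds x, HasFDerivAt f (fderiv ℝ f y) y := by
    filter_upwards [hs.mem_nhds hx] with y hy
    exact ((hf.contDiffAt (hs.mem_nhds hy)).differentiableAt (by norm_num)).hasFDerivAt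
  have hsymm := second_derivative_symmetric_of_eventually h1 hdd.hasFDerivAt w' w
  have e1 : fderiv ℝ (fun y => fderiv ℝ f y w) x
      = (fderiv ℝ f x).comp (fderiv ℝ (fun _ : ℂ × ℂ × ℂ => w) x)
        + (fderiv ℝ (fderiv ℝ f) x).flip w := fderiv_clm_apply hdd (differentiableAt_const w)
  have e2 : fderiv ℝ (fun y => fderiv ℝ f y w') x
      = (fderiv ℝ f x).comp (fderiv ℝ (fun _ : ℂ × ℂ × ℂ => w') x)
        + (fderiv ℝ (fderiv ℝ f) x).flip w' := fderiv_clm_apply hdd (differentiableAt_const w')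
  rw [e1, e2]
  simp [fderiv_const]
  exact hsymm

lemma fderiv_Wg_apply (hs : IsOpen s) (hf : ContDiffOn ℝ ∞ f s) (hx : x ∈ s)
    (e : ℂ × ℂ × ℂ) (ε : ℂ) (w : ℂ × ℂ × ℂ) :
    fderiv ℝ (Wg e ε f) x w
      = (fderiv ℝ (fun y => fderiv ℝ f y e) x w
          + ε * fderiv ℝ (fun y => fderiv ℝ f y (I • e)) x w) / 2 := by
  have d1 := fderiv_apply_differentiableAt hs hf hx e
  have d2 := fderiv_apply_differentiableAt hs hf hx (I • e)
  have hfun : Wg e ε f = fun y => (1/2 : ℂ) * (fun y' => fderiv ℝ f y' e) y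
      + (ε/2) * (fun y' => fderiv ℝ f y' (I • e)) y := by
    funext y; unfold Wg; ring
  rw [hfun, fderiv_fun_add (d1.const_mul _) (d2.const_mul _),
      fderiv_const_mul d1, fderiv_const_mul d2]
  simp; ring

lemma Wg_comm (hs : IsOpen s) (hf : ContDiffOn ℝ ∞ f s) (hx : x ∈ s)
    (e e' : ℂ × ℂ × ℂ) (ε ε' : ℂ) :
    Wg e ε (Wg e' ε' f) x = Wg e' ε' (Wg e ε f) x := by
  have h := fun (w w' : ℂ × ℂ × ℂ) => fderiv_fderiv_comm hs hf hx w w'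
  show (fderiv ℝ (Wg e' ε' f) x e + ε * fderiv ℝ (Wg e' ε' f) x (I • e)) / 2
      = (fderiv ℝ (Wg e ε f) x e' + ε' * fderiv ℝ (Wg e ε f) x (I • e')) / 2
  rw [fderiv_Wg_apply hs hf hx e' ε' e, fderiv_Wg_apply hs hf hx e' ε' (I • e),
      fderiv_Wg_apply hs hf hx e ε e', fderiv_Wg_apply hs hf hx e ε (I • e'),
      h e' e, h (I • e') e, h e' (I • e), h (I • e') (I • e)]
  ring

-- slice lemmas
lemma fderiv_slice_t {τ u v : ℂ} (hf : DifferentiableAt ℝ f (τ, u, v)) (w : ℂ) :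
    fderiv ℝ (fun z => f (z, u, v)) τ w = fderiv ℝ f (τ, u, v) (w, 0, 0) := by
  have hA : HasFDerivAt (fun z : ℂ => (z, u, v))
      ((ContinuousLinearMap.id ℝ ℂ).prod ((0 : ℂ →L[ℝ] ℂ).prod (0 : ℂ →L[ℝ] ℂ))) τ := HasFDerivAt.prodMk (hasFDerivAt_id τ) (HasFDerivAt.prodMk (hasFDerivAt_const u τ) (hasFDerivAt_const v τ))
  have h := (hf.hasFDerivAt.comp τ hA).fderiv
  rw [show (fun z => f (z, u, v)) = f ∘ (fun z => (z, u, v)) from rfl, h]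
  simp

lemma fderiv_slice_u {τ u v : ℂ} (hf : DifferentiableAt ℝ f (τ, u, v)) (w : ℂ) :
    fderiv ℝ (fun z => f (τ, z, v)) u w = fderiv ℝ f (τ, u, v) (0, w, 0) := by
  have hA : HasFDerivAt (fun z : ℂ => (τ, z, v))
      ((0 : ℂ →L[ℝ] ℂ).prod ((ContinuousLinearMap.id ℝ ℂ).prod (0 : ℂ →L[ℝ] ℂ))) u := HasFDerivAt.prodMk (hasFDerivAt_const τ u) (HasFDerivAt.prodMk (hasFDerivAt_id u) (hasFDerivAt_const v u))
  have h := (hf.hasFDerivAt.comp u hA).fderiv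
  rw [show (fun z => f (τ, z, v)) = f ∘ (fun z => (τ, z, v)) from rfl, h]
  simp

lemma fderiv_slice_v {τ u v : ℂ} (hf : DifferentiableAt ℝ f (τ, u, v)) (w : ℂ) :
    fderiv ℝ (fun z => f (τ, u, z)) v w = fderiv ℝ f (τ, u, v) (0, 0, w) := by
  have hA : HasFDerivAt (fun z : ℂ => (τ, u, z))
      ((0 : ℂ →L[ℝ] ℂ).prod ((0 : ℂ →L[ℝ] ℂ).prod (ContinuousLinearMap.id ℝ ℂ))) v := HasFDerivAt.prodMk (hasFDerivAt_const τ v) (HasFDerivAt.prodMk (hasFDerivAt_const u v) (hasFDerivAt_id v))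
  have h := (hf.hasFDerivAt.comp v hA).fderiv
  rw [show (fun z => f (τ, u, z)) = f ∘ (fun z => (τ, u, z)) from rfl, h]
  simp

lemma wd_slice_t {τ u v : ℂ} (hf : DifferentiableAt ℝ f (τ, u, v)) :
    wd (fun z => f (z, u, v)) τ = Wt f (τ, u, v) := by
  unfold wd Wt Wg
  rw [fderiv_slice_t hf, fderiv_slice_t hf]
  norm_num [Prod.smul_def]; ring

lemma wd_slice_u {τ u v : ℂ} (hf : DifferentiableAt ℝ f (τ, u, v)) :
    wd (fun z => f (τ, z, v)) u = Wu f (τ, u, v) := by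
  unfold wd Wu Wg
  rw [fderiv_slice_u hf, fderiv_slice_u hf]
  norm_num [Prod.smul_def]; ring

lemma wd_slice_v {τ u v : ℂ} (hf : DifferentiableAt ℝ f (τ, u, v)) :
    wd (fun z => f (τ, u, z)) v = Wv f (τ, u, v) := by
  unfold wd Wv Wg
  rw [fderiv_slice_v hf, fderiv_slice_v hf]
  norm_num [Prod.smul_def]; ring

lemma wdb_slice_v {τ u v : ℂ} (hf : DifferentiableAt ℝ f (τ, u, v)) :
    wdb (fun z => f (τ, u, z)) v = Wvb f (τ, u, v) := by
  unfold wdb Wvb Wg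
  rw [fderiv_slice_v hf, fderiv_slice_v hf]
  norm_num [Prod.smul_def]


-- derivative of conj
lemma hasFDerivAt_conj' (z : ℂ) :
    HasFDerivAt (fun w : ℂ => (starRingEnd ℂ) w) (Complex.conjCLE : ℂ →L[ℝ] ℂ) z :=
  Complex.conjCLE.hasFDerivAt.congr_of_eventuallyEq
    (Filter.Eventually.of_forall fun w => (Complex.conjCLE_apply w).symm)

-- generic quotient fderiv over ℝ with ℂ values on a product space
lemma fderiv_div_apply' {E : Type*} [NormedAddCommGroup E] [NormedSpace ℝ E]
    {num den : E → ℂ} {x : E} {Ln Ld : E →L[ℝ] ℂ}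
    (hn : HasFDerivAt num Ln x) (hd : HasFDerivAt den Ld x) (h0 : den x ≠ 0) (w : E) :
    fderiv ℝ (fun y => num y / den y) x w
      = (Ln w * den x - num x * Ld w) / (den x) ^ 2 := by
  have hinv : HasFDerivAt (fun z : ℂ => z⁻¹)
      ((ContinuousLinearMap.smulRight (1 : ℂ →L[ℂ] ℂ) (-((den x) ^ 2)⁻¹)).restrictScalars ℝ)
      (den x) := ((hasDerivAt_inv h0).hasFDerivAt).restrictScalars ℝ
  have hinvc : HasFDerivAt (fun y => (den y)⁻¹)
      (((ContinuousLinearMap.smulRight (1 : ℂ →L[ℂ] ℂ) (-((den x) ^ 2)⁻¹)).restrictScalars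
        ℝ).comp Ld) x := hinv.comp x hd
  have hmul := hn.fun_mul' hinvc
  have : (fun y => num y / den y) = fun y => num y * (den y)⁻¹ := by
    funext y; exact div_eq_mul_inv _ _
  rw [this, hmul.fderiv]
  simp [ContinuousLinearMap.smulRight_apply, smul_eq_mul]
  field_simp
  ring

noncomputable def Af : ℂ × ℂ × ℂ → ℂ := fun y => (y.2.2 - (starRingEnd ℂ) y.2.2) / (y.1 - (starRingEnd ℂ) y.1)
noncomputable def Bf : ℂ × ℂ × ℂ → ℂ := fun y => (1 : ℂ) / (y.1 - (starRingEnd ℂ) y.1)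

noncomputable def sndsnd : (ℂ × ℂ × ℂ) →L[ℝ] ℂ :=
  (ContinuousLinearMap.snd ℝ ℂ ℂ).comp (ContinuousLinearMap.snd ℝ ℂ (ℂ × ℂ))
noncomputable def fstL : (ℂ × ℂ × ℂ) →L[ℝ] ℂ := ContinuousLinearMap.fst ℝ ℂ (ℂ × ℂ)

lemma hasFDerivAt_num (x : ℂ × ℂ × ℂ) :
    HasFDerivAt (fun y : ℂ × ℂ × ℂ => y.2.2 - (starRingEnd ℂ) y.2.2)
      (sndsnd - (Complex.conjCLE : ℂ →L[ℝ] ℂ).comp sndsnd) x :=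
  (sndsnd.hasFDerivAt).sub ((hasFDerivAt_conj' _).comp x sndsnd.hasFDerivAt)

lemma hasFDerivAt_den (x : ℂ × ℂ × ℂ) :
    HasFDerivAt (fun y : ℂ × ℂ × ℂ => y.1 - (starRingEnd ℂ) y.1)
      (fstL - (Complex.conjCLE : ℂ →L[ℝ] ℂ).comp fstL) x :=
  (fstL.hasFDerivAt).sub ((hasFDerivAt_conj' _).comp x fstL.hasFDerivAt)

lemma fderiv_Af {x : ℂ × ℂ × ℂ} (hx : x.1 - (starRingEnd ℂ) x.1 ≠ 0) (w : ℂ × ℂ × ℂ) :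
    fderiv ℝ Af x w = ((w.2.2 - (starRingEnd ℂ) w.2.2) * (x.1 - (starRingEnd ℂ) x.1)
      - (x.2.2 - (starRingEnd ℂ) x.2.2) * (w.1 - (starRingEnd ℂ) w.1))
        / (x.1 - (starRingEnd ℂ) x.1) ^ 2 := by
  have h := fderiv_div_apply' (hasFDerivAt_num x) (hasFDerivAt_den x) hx w
  rw [show Af = fun y => (y.2.2 - (starRingEnd ℂ) y.2.2) / (y.1 - (starRingEnd ℂ) y.1) from rfl, h]
  simp [sndsnd, fstL, Complex.conjCLE_apply]

lemma fderiv_Bf {x : ℂ × ℂ × ℂ} (hx : x.1 - (starRingEnd ℂ) x.1 ≠ 0) (w : ℂ × ℂ × ℂ) :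
    fderiv ℝ Bf x w = (- (w.1 - (starRingEnd ℂ) w.1)) / (x.1 - (starRingEnd ℂ) x.1) ^ 2 := by
  have h := fderiv_div_apply' (hasFDerivAt_const (1 : ℂ) x) (hasFDerivAt_den x) hx w
  rw [show Bf = fun y => (1 : ℂ) / (y.1 - (starRingEnd ℂ) y.1) from rfl, h]
  simp [fstL, Complex.conjCLE_apply]

-- mid-level lemmas (appended to b.lean for testing)

lemma slice_t_diff (hs : IsOpen s) (hh : ContDiffOn ℝ ∞ f s) {τ u v : ℂ} (hx : (τ, u, v) ∈ s) :
    DifferentiableAt ℝ (fun z => f (z, u, v)) τ :=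
  ((hh.contDiffAt (hs.mem_nhds hx)).differentiableAt (by norm_num)).comp τ
    (DifferentiableAt.prodMk (differentiableAt_id) (DifferentiableAt.prodMk (differentiableAt_const u) (differentiableAt_const v)))

lemma slice_u_diff (hs : IsOpen s) (hh : ContDiffOn ℝ ∞ f s) {τ u v : ℂ} (hx : (τ, u, v) ∈ s) :
    DifferentiableAt ℝ (fun z => f (τ, z, v)) u :=
  ((hh.contDiffAt (hs.mem_nhds hx)).differentiableAt (by norm_num)).comp u
    (DifferentiableAt.prodMk (differentiableAt_const τ) (DifferentiableAt.prodMk (differentiableAt_id) (differentiableAt_const v)))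

lemma slice_v_diff (hs : IsOpen s) (hh : ContDiffOn ℝ ∞ f s) {τ u v : ℂ} (hx : (τ, u, v) ∈ s) :
    DifferentiableAt ℝ (fun z => f (τ, u, z)) v :=
  ((hh.contDiffAt (hs.mem_nhds hx)).differentiableAt (by norm_num)).comp v
    (DifferentiableAt.prodMk (differentiableAt_const τ) (DifferentiableAt.prodMk (differentiableAt_const u) differentiableAt_id))

lemma mem_nhds_slice_t (hs : IsOpen s) {τ u v : ℂ} (hx : (τ, u, v) ∈ s) :
    {z : ℂ | (z, u, v) ∈ s} ∈ nhds τ :=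
  (hs.preimage (continuous_id.prodMk
    (continuous_const.prodMk continuous_const))).mem_nhds hx

lemma mem_nhds_slice_u (hs : IsOpen s) {τ u v : ℂ} (hx : (τ, u, v) ∈ s) :
    {z : ℂ | (τ, z, v) ∈ s} ∈ nhds u :=
  (hs.preimage (continuous_const.prodMk
    (continuous_id.prodMk continuous_const))).mem_nhds hx

lemma mem_nhds_slice_v (hs : IsOpen s) {τ u v : ℂ} (hx : (τ, u, v) ∈ s) :
    {z : ℂ | (τ, u, z) ∈ s} ∈ nhds v :=
  (hs.preimage (continuous_const.prodMk
    (continuous_const.prodMk continuous_id))).mem_nhds hx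

lemma Delta_of (c : ℂ) {h : ℂ × ℂ × ℂ → ℂ} (hs : IsOpen s) (hh : ContDiffOn ℝ ∞ h s)
    {G : ℂ → ℂ → ℂ → ℂ → ℂ}
    (hG : ∀ τ' u' v' t', (τ', u', v') ∈ s →
      G τ' u' v' t' = Complex.exp (c * t') * h (τ', u', v'))
    {τ u v : ℂ} (t : ℂ) (hx : (τ, u, v) ∈ s) :
    DeltaOp G τ u v t = Complex.exp (c * t) *
      (2 * ((v - (starRingEnd ℂ) v) / (τ - (starRingEnd ℂ) τ)) * (c * Wvb h (τ, u, v))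
        - Wv (Wvb h) (τ, u, v)) := by
  have step1 : ∀ v' t', (τ, u, v') ∈ s →
      wdb (fun v'' => G τ u v'' t') v' = Complex.exp (c * t') * Wvb h (τ, u, v') := by
    intro v' t' hv'
    have hev : (fun v'' => G τ u v'' t')
        =ᶠ[nhds v'] (fun v'' => Complex.exp (c * t') * h (τ, u, v'')) := by
      filter_upwards [mem_nhds_slice_v hs hv'] with z hz using hG τ u z t' hz
    rw [wdb_congr hev, wdb_const_mul (slice_v_diff hs hh hv'),
        wdb_slice_v ((hh.contDiffAt (hs.mem_nhds hv')).differentiableAt (by norm_num))]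
  have term1 : wd (fun t' => wdb (fun v' => G τ u v' t') v) t
      = c * (Complex.exp (c * t) * Wvb h (τ, u, v)) := by
    have : (fun t' => wdb (fun v' => G τ u v' t') v)
        = fun t' => Complex.exp (c * t') * Wvb h (τ, u, v) := by
      funext t'; exact step1 v t' hx
    rw [this, wd_exp_mul]
  have hWvb : ContDiffOn ℝ ∞ (Wvb h) s := Wg_contDiffOn hs hh _ _
  have term2 : wd (fun v' => wdb (fun v'' => G τ u v'' t) v') v
      = Complex.exp (c * t) * Wv (Wvb h) (τ, u, v) := by
    have hev : (fun v' => wdb (fun v'' => G τ u v'' t) v')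
        =ᶠ[nhds v] (fun v' => Complex.exp (c * t) * Wvb h (τ, u, v')) := by
      filter_upwards [mem_nhds_slice_v hs hx] with z hz using step1 z t hz
    rw [wd_congr hev, wd_const_mul (slice_v_diff hs hWvb hx),
        wd_slice_v ((hWvb.contDiffAt (hs.mem_nhds hx)).differentiableAt (by norm_num))]
  unfold DeltaOp
  rw [term1, term2]
  ring

lemma D_of (c : ℂ) {h : ℂ × ℂ × ℂ → ℂ} (hs : IsOpen s) (hh : ContDiffOn ℝ ∞ h s)
    {G : ℂ → ℂ → ℂ → ℂ → ℂ}
    (hG : ∀ τ' u' v' t', (τ', u', v') ∈ s →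
      G τ' u' v' t' = Complex.exp (c * t') * h (τ', u', v'))
    {τ u v : ℂ} (t : ℂ) (hx : (τ, u, v) ∈ s) :
    Dop G τ u v t = Complex.exp (c * t) *
      (4 * c * Wt h (τ, u, v) + Wv (Wv h) (τ, u, v) - Wu (Wu h) (τ, u, v)) := by
  have stept : ∀ τ' t', (τ', u, v) ∈ s →
      wd (fun z => G z u v t') τ' = Complex.exp (c * t') * Wt h (τ', u, v) := by
    intro τ' t' hv'
    have hev : (fun z => G z u v t')
        =ᶠ[nhds τ'] (fun z => Complex.exp (c * t') * h (z, u, v)) := by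
      filter_upwards [mem_nhds_slice_t hs hv'] with z hz using hG z u v t' hz
    rw [wd_congr hev, wd_const_mul (slice_t_diff hs hh hv'),
        wd_slice_t ((hh.contDiffAt (hs.mem_nhds hv')).differentiableAt (by norm_num))]
  have stepv : ∀ v' t', (τ, u, v') ∈ s →
      wd (fun z => G τ u z t') v' = Complex.exp (c * t') * Wv h (τ, u, v') := by
    intro v' t' hv'
    have hev : (fun z => G τ u z t')
        =ᶠ[nhds v'] (fun z => Complex.exp (c * t') * h (τ, u, z)) := by
      filter_upwards [mem_nhds_slice_v hs hv'] with z hz using hG τ u z t' hz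
    rw [wd_congr hev, wd_const_mul (slice_v_diff hs hh hv'),
        wd_slice_v ((hh.contDiffAt (hs.mem_nhds hv')).differentiableAt (by norm_num))]
  have stepu : ∀ u' t', (τ, u', v) ∈ s →
      wd (fun z => G τ z v t') u' = Complex.exp (c * t') * Wu h (τ, u', v) := by
    intro u' t' hv'
    have hev : (fun z => G τ z v t')
        =ᶠ[nhds u'] (fun z => Complex.exp (c * t') * h (τ, z, v)) := by
      filter_upwards [mem_nhds_slice_u hs hv'] with z hz using hG τ z v t' hz
    rw [wd_congr hev, wd_const_mul (slice_u_diff hs hh hv'),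
        wd_slice_u ((hh.contDiffAt (hs.mem_nhds hv')).differentiableAt (by norm_num))]
  have term1 : wd (fun t' => wd (fun z => G z u v t') τ) t
      = c * (Complex.exp (c * t) * Wt h (τ, u, v)) := by
    have : (fun t' => wd (fun z => G z u v t') τ)
        = fun t' => Complex.exp (c * t') * Wt h (τ, u, v) := by
      funext t'; exact stept τ t' hx
    rw [this, wd_exp_mul]
  have hWv : ContDiffOn ℝ ∞ (Wv h) s := Wg_contDiffOn hs hh _ _
  have hWu : ContDiffOn ℝ ∞ (Wu h) s := Wg_contDiffOn hs hh _ _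
  have term2 : wd (fun v' => wd (fun v'' => G τ u v'' t) v') v
      = Complex.exp (c * t) * Wv (Wv h) (τ, u, v) := by
    have hev : (fun v' => wd (fun v'' => G τ u v'' t) v')
        =ᶠ[nhds v] (fun v' => Complex.exp (c * t) * Wv h (τ, u, v')) := by
      filter_upwards [mem_nhds_slice_v hs hx] with z hz using stepv z t hz
    rw [wd_congr hev, wd_const_mul (slice_v_diff hs hWv hx),
        wd_slice_v ((hWv.contDiffAt (hs.mem_nhds hx)).differentiableAt (by norm_num))]
  have term3 : wd (fun u' => wd (fun u'' => G τ u'' v t) u') u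
      = Complex.exp (c * t) * Wu (Wu h) (τ, u, v) := by
    have hev : (fun u' => wd (fun u'' => G τ u'' v t) u')
        =ᶠ[nhds u] (fun u' => Complex.exp (c * t) * Wu h (τ, u', v)) := by
      filter_upwards [mem_nhds_slice_u hs hx] with z hz using stepu z t hz
    rw [wd_congr hev, wd_const_mul (slice_u_diff hs hWu hx),
        wd_slice_u ((hWu.contDiffAt (hs.mem_nhds hx)).differentiableAt (by norm_num))]
  unfold Dop
  rw [term1, term2, term3]
  ring

-- pointwise algebra for Wg
lemma Wg_congr {e : ℂ × ℂ × ℂ} {ε : ℂ} (h : f₁ =ᶠ[nhds x] f₂) :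
    Wg e ε f₁ x = Wg e ε f₂ x := by
  unfold Wg; rw [h.fderiv_eq]

lemma Wg_add {e : ℂ × ℂ × ℂ} {ε : ℂ} (h₁ : DifferentiableAt ℝ f₁ x)
    (h₂ : DifferentiableAt ℝ f₂ x) :
    Wg e ε (fun y => f₁ y + f₂ y) x = Wg e ε f₁ x + Wg e ε f₂ x := by
  unfold Wg; rw [fderiv_fun_add h₁ h₂]; simp; ring

lemma Wg_sub {e : ℂ × ℂ × ℂ} {ε : ℂ} (h₁ : DifferentiableAt ℝ f₁ x)
    (h₂ : DifferentiableAt ℝ f₂ x) :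
    Wg e ε (fun y => f₁ y - f₂ y) x = Wg e ε f₁ x - Wg e ε f₂ x := by
  unfold Wg; rw [fderiv_fun_sub h₁ h₂]; simp; ring

lemma Wg_const_mul {e : ℂ × ℂ × ℂ} {ε : ℂ} (h₁ : DifferentiableAt ℝ f₁ x) (C : ℂ) :
    Wg e ε (fun y => C * f₁ y) x = C * Wg e ε f₁ x := by
  unfold Wg; rw [fderiv_const_mul h₁]; simp; ring

lemma Wg_mul {e : ℂ × ℂ × ℂ} {ε : ℂ} (h₁ : DifferentiableAt ℝ f₁ x)
    (h₂ : DifferentiableAt ℝ f₂ x) :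
    Wg e ε (fun y => f₁ y * f₂ y) x
      = Wg e ε f₁ x * f₂ x + f₁ x * Wg e ε f₂ x := by
  unfold Wg; rw [fderiv_fun_mul h₁ h₂]; simp [smul_eq_mul]; ring

lemma cdOn_diffAt (hs : IsOpen s) (hf : ContDiffOn ℝ ∞ f s) (hx : x ∈ s) :
    DifferentiableAt ℝ f x :=
  (hf.contDiffAt (hs.mem_nhds hx)).differentiableAt (by norm_num)

-- facts about Af and Bf
lemma den_ne {z : ℂ} (hz : 0 < z.im) : z - (starRingEnd ℂ) z ≠ 0 := by
  rw [Complex.sub_conj]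
  exact mul_ne_zero (by exact_mod_cast mul_ne_zero two_ne_zero hz.ne') I_ne_zero

lemma contDiff_conj' : ContDiff ℝ ∞ (fun z : ℂ => (starRingEnd ℂ) z) := by
  have h := (Complex.conjCLE : ℂ →L[ℝ] ℂ).contDiff (n := ∞)
  have e : (fun z : ℂ => (starRingEnd ℂ) z) = ⇑(Complex.conjCLE : ℂ →L[ℝ] ℂ) := by
    funext z; simp
  rw [e]; exact h

lemma contDiff_num : ContDiff ℝ ∞ (fun y : ℂ × ℂ × ℂ => y.2.2 - (starRingEnd ℂ) y.2.2) := by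
  have h1 : ContDiff ℝ ∞ (fun y : ℂ × ℂ × ℂ => y.2.2) := sndsnd.contDiff
  exact h1.sub (contDiff_conj'.comp h1)

lemma contDiff_den : ContDiff ℝ ∞ (fun y : ℂ × ℂ × ℂ => y.1 - (starRingEnd ℂ) y.1) := by
  have h1 : ContDiff ℝ ∞ (fun y : ℂ × ℂ × ℂ => y.1) := fstL.contDiff
  exact h1.sub (contDiff_conj'.comp h1)

lemma contDiffOn_Af {s : Set (ℂ × ℂ × ℂ)} (hmem : ∀ y ∈ s, 0 < y.1.im) :
    ContDiffOn ℝ ∞ Af s := by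
  have : Af = fun y => (y.2.2 - (starRingEnd ℂ) y.2.2) * (y.1 - (starRingEnd ℂ) y.1)⁻¹ := by
    funext y; exact div_eq_mul_inv _ _
  rw [this]
  exact contDiff_num.contDiffOn.mul
    (contDiff_den.contDiffOn.inv fun y hy => den_ne (hmem y hy))

lemma contDiffOn_Bf {s : Set (ℂ × ℂ × ℂ)} (hmem : ∀ y ∈ s, 0 < y.1.im) :
    ContDiffOn ℝ ∞ Bf s := by
  have : Bf = fun y => (1 : ℂ) * (y.1 - (starRingEnd ℂ) y.1)⁻¹ := by
    funext y; exact div_eq_mul_inv _ _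
  rw [this]
  exact contDiffOn_const.mul (contDiff_den.contDiffOn.inv fun y hy => den_ne (hmem y hy))

lemma Wt_Af (hx : x.1 - (starRingEnd ℂ) x.1 ≠ 0) :
    Wt Af x = -(x.2.2 - (starRingEnd ℂ) x.2.2) / (x.1 - (starRingEnd ℂ) x.1) ^ 2 := by
  unfold Wt Wg
  rw [fderiv_Af hx, fderiv_Af hx]
  simp [Prod.smul_def, Complex.conj_I]
  field_simp
  ring_nf
  simp only [Complex.I_sq]
  ring

lemma Wu_Af (hx : x.1 - (starRingEnd ℂ) x.1 ≠ 0) : Wu Af x = 0 := by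
  unfold Wu Wg
  rw [fderiv_Af hx, fderiv_Af hx]
  simp [Prod.smul_def]

lemma Wv_Af (hx : x.1 - (starRingEnd ℂ) x.1 ≠ 0) :
    Wv Af x = 1 / (x.1 - (starRingEnd ℂ) x.1) := by
  unfold Wv Wg
  rw [fderiv_Af hx, fderiv_Af hx]
  simp [Prod.smul_def, Complex.conj_I]
  field_simp
  ring_nf
  simp only [Complex.I_sq]
  ring

lemma Wv_Bf (hx : x.1 - (starRingEnd ℂ) x.1 ≠ 0) : Wv Bf x = 0 := by
  unfold Wv Wg
  rw [fderiv_Bf hx, fderiv_Bf hx]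
  simp [Prod.smul_def]

variable {f₃ f₄ f₅ : ℂ × ℂ × ℂ → ℂ}

lemma Wg_L1 {e : ℂ × ℂ × ℂ} {ε : ℂ} (C₁ : ℂ) (h₁ : DifferentiableAt ℝ f₁ x)
    (h₂ : DifferentiableAt ℝ f₂ x) (h₃ : DifferentiableAt ℝ f₃ x) :
    Wg e ε (fun y => C₁ * f₁ y + f₂ y - f₃ y) x
      = C₁ * Wg e ε f₁ x + Wg e ε f₂ x - Wg e ε f₃ x := by
  rw [Wg_sub ((h₁.const_mul C₁).fun_add h₂) h₃, Wg_add (h₁.const_mul C₁) h₂, Wg_const_mul h₁]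

lemma Wg_L2 {e : ℂ × ℂ × ℂ} {ε : ℂ} (C₁ C₂ : ℂ) (h₁ : DifferentiableAt ℝ f₁ x)
    (h₂ : DifferentiableAt ℝ f₂ x) (h₃ : DifferentiableAt ℝ f₃ x) :
    Wg e ε (fun y => C₁ * f₁ y * (C₂ * f₂ y) - f₃ y) x
      = C₁ * C₂ * (Wg e ε f₁ x * f₂ x + f₁ x * Wg e ε f₂ x) - Wg e ε f₃ x := by
  have hre : (fun y => C₁ * f₁ y * (C₂ * f₂ y) - f₃ y)
      = fun y => C₁ * C₂ * (f₁ y * f₂ y) - f₃ y := by funext y; ring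
  rw [hre, Wg_sub ((h₁.fun_mul h₂).const_mul (C₁ * C₂)) h₃,
      Wg_const_mul (h₁.fun_mul h₂), Wg_mul h₁ h₂]

lemma Wg_L3 {e : ℂ × ℂ × ℂ} {ε : ℂ} (C : ℂ) (h₁ : DifferentiableAt ℝ f₁ x)
    (h₂ : DifferentiableAt ℝ f₂ x) (h₃ : DifferentiableAt ℝ f₃ x)
    (h₄ : DifferentiableAt ℝ f₄ x) (h₅ : DifferentiableAt ℝ f₅ x) :
    Wg e ε (fun y => C * (f₁ y * f₂ y + f₃ y * f₄ y) - f₅ y) x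
      = C * ((Wg e ε f₁ x * f₂ x + f₁ x * Wg e ε f₂ x)
          + (Wg e ε f₃ x * f₄ x + f₃ x * Wg e ε f₄ x)) - Wg e ε f₅ x := by
  rw [Wg_sub (((h₁.fun_mul h₂).fun_add (h₃.fun_mul h₄)).const_mul C) h₅,
      Wg_const_mul ((h₁.fun_mul h₂).fun_add (h₃.fun_mul h₄)), Wg_add (h₁.fun_mul h₂) (h₃.fun_mul h₄),
      Wg_mul h₁ h₂, Wg_mul h₃ h₄]

lemma Wg_L4 {e : ℂ × ℂ × ℂ} {ε : ℂ} (C : ℂ) (h₁ : DifferentiableAt ℝ f₁ x)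
    (h₂ : DifferentiableAt ℝ f₂ x) (h₃ : DifferentiableAt ℝ f₃ x) :
    Wg e ε (fun y => C * (f₁ y * f₂ y) - f₃ y) x
      = C * (Wg e ε f₁ x * f₂ x + f₁ x * Wg e ε f₂ x) - Wg e ε f₃ x := by
  rw [Wg_sub ((h₁.fun_mul h₂).const_mul C) h₃, Wg_const_mul (h₁.fun_mul h₂), Wg_mul h₁ h₂]


set_option maxHeartbeats 2000000 in
theorem main_aux (c : ℂ) (g : ℂ × ℂ × ℂ → ℂ) (hg : ContDiff ℝ ∞ g)
    (F : ℂ → ℂ → ℂ → ℂ → ℂ)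
    (hGF : ∀ τ' u' v' t' : ℂ, F τ' u' v' t' = Complex.exp (c * t') * g (τ', u', v'))
    (τ u v t : ℂ) (hτ : 0 < τ.im) :
    DeltaOp (Dop F) τ u v t - Dop (DeltaOp F) τ u v t
      = 4 * c / (τ - (starRingEnd ℂ) τ) * DeltaOp F τ u v t := by
  set S : Set (ℂ × ℂ × ℂ) := {y : ℂ × ℂ × ℂ | 0 < y.1.im} with hSdef
  have hS : IsOpen S := isOpen_lt continuous_const (Complex.continuous_im.comp continuous_fst)
  have hx : ((τ, u, v) : ℂ × ℂ × ℂ) ∈ S := hτ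
  have hgOn : ContDiffOn ℝ ∞ g S := hg.contDiffOn
  have dne : ∀ {y : ℂ × ℂ × ℂ}, y ∈ S → y.1 - (starRingEnd ℂ) y.1 ≠ 0 := fun hy => den_ne hy
  have hAf : ContDiffOn ℝ ∞ Af S := contDiffOn_Af (fun y hy => hy)
  have hBf : ContDiffOn ℝ ∞ Bf S := contDiffOn_Bf (fun y hy => hy)
  have hGF' : ∀ τ' u' v' t', (τ', u', v') ∈ S →
      F τ' u' v' t' = Complex.exp (c * t') * g (τ', u', v') := fun τ' u' v' t' _ => hGF τ' u' v' t'
  have dAt : ∀ {f : ℂ × ℂ × ℂ → ℂ}, ContDiffOn ℝ ∞ f S →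
      ∀ {y : ℂ × ℂ × ℂ}, y ∈ S → DifferentiableAt ℝ f y := fun hf _ hy => cdOn_diffAt hS hf hy
  -- smoothness inventory
  have oTg : ContDiffOn ℝ ∞ (Wt g) S := Wg_contDiffOn hS hgOn _ _
  have oUg : ContDiffOn ℝ ∞ (Wu g) S := Wg_contDiffOn hS hgOn _ _
  have oVg : ContDiffOn ℝ ∞ (Wv g) S := Wg_contDiffOn hS hgOn _ _
  have oP : ContDiffOn ℝ ∞ (Wvb g) S := Wg_contDiffOn hS hgOn _ _
  have oVVg : ContDiffOn ℝ ∞ (Wv (Wv g)) S := Wg_contDiffOn hS oVg _ _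
  have oUUg : ContDiffOn ℝ ∞ (Wu (Wu g)) S := Wg_contDiffOn hS oUg _ _
  have oTP : ContDiffOn ℝ ∞ (Wt (Wvb g)) S := Wg_contDiffOn hS oP _ _
  have oVP : ContDiffOn ℝ ∞ (Wv (Wvb g)) S := Wg_contDiffOn hS oP _ _
  have oUP : ContDiffOn ℝ ∞ (Wu (Wvb g)) S := Wg_contDiffOn hS oP _ _
  have oVVP : ContDiffOn ℝ ∞ (Wv (Wv (Wvb g))) S := Wg_contDiffOn hS oVP _ _
  have oUUP : ContDiffOn ℝ ∞ (Wu (Wu (Wvb g))) S := Wg_contDiffOn hS oUP _ _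
  have oUVP : ContDiffOn ℝ ∞ (Wu (Wv (Wvb g))) S := Wg_contDiffOn hS oVP _ _
  -- ev-eq helper
  have evS : ∀ {f₁ f₂ : ℂ × ℂ × ℂ → ℂ}, (∀ y ∈ S, f₁ y = f₂ y) →
      ∀ {y : ℂ × ℂ × ℂ}, y ∈ S → f₁ =ᶠ[nhds y] f₂ := by
    intro f₁ f₂ h y hy
    filter_upwards [hS.mem_nhds hy] with z hz using h z hz
  -- commutation lemmas for g
  have cTP : ∀ y ∈ S, Wvb (Wt g) y = Wt (Wvb g) y := fun y hy => Wg_comm hS hgOn hy _ _ _ _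
  have cVP : ∀ y ∈ S, Wvb (Wv g) y = Wv (Wvb g) y := fun y hy => Wg_comm hS hgOn hy _ _ _ _
  have cUP : ∀ y ∈ S, Wvb (Wu g) y = Wu (Wvb g) y := fun y hy => Wg_comm hS hgOn hy _ _ _ _
  have cVU : ∀ y ∈ S, Wv (Wu (Wvb g)) y = Wu (Wv (Wvb g)) y :=
    fun y hy => Wg_comm hS oP hy _ _ _ _
  have c2 : ∀ y ∈ S, Wvb (Wv (Wv g)) y = Wv (Wv (Wvb g)) y := by
    intro y hy
    have h1 : Wvb (Wv (Wv g)) y = Wv (Wvb (Wv g)) y := Wg_comm hS oVg hy _ _ _ _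
    rw [h1]
    exact Wg_congr (evS cVP hy)
  have c3 : ∀ y ∈ S, Wvb (Wu (Wu g)) y = Wu (Wu (Wvb g)) y := by
    intro y hy
    have h1 : Wvb (Wu (Wu g)) y = Wu (Wvb (Wu g)) y := Wg_comm hS oUg hy _ _ _ _
    rw [h1]
    exact Wg_congr (evS cUP hy)
  -- the operators applied to F
  have hDopF : ∀ τ' u' v' t', (τ', u', v') ∈ S →
      Dop F τ' u' v' t' = Complex.exp (c * t') * (fun y => 4 * c * Wt g y + Wv (Wv g) y - Wu (Wu g) y) (τ', u', v') :=
    fun τ' u' v' t' hmem => D_of c hS hgOn hGF' t' hmem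
  have hHOn : ContDiffOn ℝ ∞ (fun y => 4 * c * Wt g y + Wv (Wv g) y - Wu (Wu g) y) S := ((contDiffOn_const.mul oTg).add oVVg).sub oUUg
  have hDD : DeltaOp (Dop F) τ u v t = Complex.exp (c * t) *
      (2 * ((v - (starRingEnd ℂ) v) / (τ - (starRingEnd ℂ) τ)) * (c * Wvb (fun y => 4 * c * Wt g y + Wv (Wv g) y - Wu (Wu g) y) ((τ, u, v) : ℂ × ℂ × ℂ))
        - Wv (Wvb (fun y => 4 * c * Wt g y + Wv (Wv g) y - Wu (Wu g) y)) ((τ, u, v) : ℂ × ℂ × ℂ)) := Delta_of c hS hHOn hDopF t hx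
  have hDF : ∀ τ' u' v' t', (τ', u', v') ∈ S →
      DeltaOp F τ' u' v' t' = Complex.exp (c * t') * (fun y => 2 * Af y * (c * Wvb g y) - Wv (Wvb g) y) (τ', u', v') :=
    fun τ' u' v' t' hmem => Delta_of c hS hgOn hGF' t' hmem
  have hKOn : ContDiffOn ℝ ∞ (fun y => 2 * Af y * (c * Wvb g y) - Wv (Wvb g) y) S :=
    ((contDiffOn_const.mul hAf).mul (contDiffOn_const.mul oP)).sub oVP
  have hDDel : Dop (DeltaOp F) τ u v t = Complex.exp (c * t) *
      (4 * c * Wt (fun y => 2 * Af y * (c * Wvb g y) - Wv (Wvb g) y) ((τ, u, v) : ℂ × ℂ × ℂ) + Wv (Wv (fun y => 2 * Af y * (c * Wvb g y) - Wv (Wvb g) y)) ((τ, u, v) : ℂ × ℂ × ℂ) - Wu (Wu (fun y => 2 * Af y * (c * Wvb g y) - Wv (Wvb g) y)) ((τ, u, v) : ℂ × ℂ × ℂ)) :=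
    D_of c hS hKOn hDF t hx
  -- expansion of the ΔD side
  have eH : ∀ y ∈ S, Wvb (fun y => 4 * c * Wt g y + Wv (Wv g) y - Wu (Wu g) y) y
      = 4 * c * Wt (Wvb g) y + Wv (Wv (Wvb g)) y - Wu (Wu (Wvb g)) y := by
    intro y hy
    have h' : Wvb (fun y => 4 * c * Wt g y + Wv (Wv g) y - Wu (Wu g) y) y = 4 * c * Wvb (Wt g) y + Wvb (Wv (Wv g)) y - Wvb (Wu (Wu g)) y :=
      Wg_L1 (4 * c) (dAt oTg hy) (dAt oVVg hy) (dAt oUUg hy)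
    rw [h', cTP y hy, c2 y hy, c3 y hy]
  have eWvH : Wv (Wvb (fun y => 4 * c * Wt g y + Wv (Wv g) y - Wu (Wu g) y)) ((τ, u, v) : ℂ × ℂ × ℂ)
      = 4 * c * Wt (Wv (Wvb g)) ((τ, u, v) : ℂ × ℂ × ℂ) + Wv (Wv (Wv (Wvb g))) ((τ, u, v) : ℂ × ℂ × ℂ)
        - Wu (Wu (Wv (Wvb g))) ((τ, u, v) : ℂ × ℂ × ℂ) := by
    have h0 : Wv (Wvb (fun y => 4 * c * Wt g y + Wv (Wv g) y - Wu (Wu g) y)) ((τ, u, v) : ℂ × ℂ × ℂ) = Wv (fun y => 4 * c * Wt (Wvb g) y + Wv (Wv (Wvb g)) y - Wu (Wu (Wvb g)) y) ((τ, u, v) : ℂ × ℂ × ℂ) := Wg_congr (evS eH hx)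
    have h1 : Wv (fun y => 4 * c * Wt (Wvb g) y + Wv (Wv (Wvb g)) y - Wu (Wu (Wvb g)) y) ((τ, u, v) : ℂ × ℂ × ℂ) = 4 * c * Wv (Wt (Wvb g)) ((τ, u, v) : ℂ × ℂ × ℂ) + Wv (Wv (Wv (Wvb g))) ((τ, u, v) : ℂ × ℂ × ℂ)
        - Wv (Wu (Wu (Wvb g))) ((τ, u, v) : ℂ × ℂ × ℂ) :=
      Wg_L1 (4 * c) (dAt oTP hx) (dAt oVVP hx) (dAt oUUP hx)
    have hA : Wv (Wt (Wvb g)) ((τ, u, v) : ℂ × ℂ × ℂ) = Wt (Wv (Wvb g)) ((τ, u, v) : ℂ × ℂ × ℂ) := Wg_comm hS oP hx _ _ _ _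
    have hB : Wv (Wu (Wu (Wvb g))) ((τ, u, v) : ℂ × ℂ × ℂ) = Wu (Wv (Wu (Wvb g))) ((τ, u, v) : ℂ × ℂ × ℂ) :=
      Wg_comm hS oUP hx _ _ _ _
    have hB2 : Wu (Wv (Wu (Wvb g))) ((τ, u, v) : ℂ × ℂ × ℂ) = Wu (Wu (Wv (Wvb g))) ((τ, u, v) : ℂ × ℂ × ℂ) :=
      Wg_congr (evS cVU hx)
    rw [h0, h1, hA, hB, hB2]
  -- expansion of the DΔ side
  have eKt : Wt (fun y => 2 * Af y * (c * Wvb g y) - Wv (Wvb g) y) ((τ, u, v) : ℂ × ℂ × ℂ)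
      = 2 * c * (-(v - (starRingEnd ℂ) v) / (τ - (starRingEnd ℂ) τ) ^ 2 * Wvb g ((τ, u, v) : ℂ × ℂ × ℂ)
          + Af ((τ, u, v) : ℂ × ℂ × ℂ) * Wt (Wvb g) ((τ, u, v) : ℂ × ℂ × ℂ)) - Wt (Wv (Wvb g)) ((τ, u, v) : ℂ × ℂ × ℂ) := by
    have h : Wt (fun y => 2 * Af y * (c * Wvb g y) - Wv (Wvb g) y) ((τ, u, v) : ℂ × ℂ × ℂ) = 2 * c * (Wt Af ((τ, u, v) : ℂ × ℂ × ℂ) * Wvb g ((τ, u, v) : ℂ × ℂ × ℂ) + Af ((τ, u, v) : ℂ × ℂ × ℂ) * Wt (Wvb g) ((τ, u, v) : ℂ × ℂ × ℂ))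
        - Wt (Wv (Wvb g)) ((τ, u, v) : ℂ × ℂ × ℂ) :=
      Wg_L2 2 c (dAt hAf hx) (dAt oP hx) (dAt oVP hx)
    rw [h, Wt_Af (dne hx)]
  have eKv : ∀ y ∈ S, Wv (fun y => 2 * Af y * (c * Wvb g y) - Wv (Wvb g) y) y
      = 2 * c * (Bf y * Wvb g y + Af y * Wv (Wvb g) y) - Wv (Wv (Wvb g)) y := by
    intro y hy
    have h : Wv (fun y => 2 * Af y * (c * Wvb g y) - Wv (Wvb g) y) y = 2 * c * (Wv Af y * Wvb g y + Af y * Wv (Wvb g) y)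
        - Wv (Wv (Wvb g)) y :=
      Wg_L2 2 c (dAt hAf hy) (dAt oP hy) (dAt oVP hy)
    rw [h, Wv_Af (dne hy)]
    simp only [Bf]
  have eWvK : Wv (Wv (fun y => 2 * Af y * (c * Wvb g y) - Wv (Wvb g) y)) ((τ, u, v) : ℂ × ℂ × ℂ)
      = 2 * c * (2 * Bf ((τ, u, v) : ℂ × ℂ × ℂ) * Wv (Wvb g) ((τ, u, v) : ℂ × ℂ × ℂ) + Af ((τ, u, v) : ℂ × ℂ × ℂ) * Wv (Wv (Wvb g)) ((τ, u, v) : ℂ × ℂ × ℂ))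
        - Wv (Wv (Wv (Wvb g))) ((τ, u, v) : ℂ × ℂ × ℂ) := by
    have h0 : Wv (Wv (fun y => 2 * Af y * (c * Wvb g y) - Wv (Wvb g) y)) ((τ, u, v) : ℂ × ℂ × ℂ) = Wv (fun y => 2 * c * (Bf y * Wvb g y + Af y * Wv (Wvb g) y) - Wv (Wv (Wvb g)) y) ((τ, u, v) : ℂ × ℂ × ℂ) := Wg_congr (evS eKv hx)
    have h1 : Wv (fun y => 2 * c * (Bf y * Wvb g y + Af y * Wv (Wvb g) y) - Wv (Wv (Wvb g)) y) ((τ, u, v) : ℂ × ℂ × ℂ)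
        = 2 * c * ((Wv Bf ((τ, u, v) : ℂ × ℂ × ℂ) * Wvb g ((τ, u, v) : ℂ × ℂ × ℂ) + Bf ((τ, u, v) : ℂ × ℂ × ℂ) * Wv (Wvb g) ((τ, u, v) : ℂ × ℂ × ℂ))
            + (Wv Af ((τ, u, v) : ℂ × ℂ × ℂ) * Wv (Wvb g) ((τ, u, v) : ℂ × ℂ × ℂ) + Af ((τ, u, v) : ℂ × ℂ × ℂ) * Wv (Wv (Wvb g)) ((τ, u, v) : ℂ × ℂ × ℂ)))
          - Wv (Wv (Wv (Wvb g))) ((τ, u, v) : ℂ × ℂ × ℂ) :=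
      Wg_L3 (2 * c) (dAt hBf hx) (dAt oP hx) (dAt hAf hx) (dAt oVP hx) (dAt oVVP hx)
    rw [h0, h1, Wv_Bf (dne hx), Wv_Af (dne hx)]
    simp only [Bf]
    ring
  have eKu : ∀ y ∈ S, Wu (fun y => 2 * Af y * (c * Wvb g y) - Wv (Wvb g) y) y
      = 2 * c * (Af y * Wu (Wvb g) y) - Wu (Wv (Wvb g)) y := by
    intro y hy
    have h : Wu (fun y => 2 * Af y * (c * Wvb g y) - Wv (Wvb g) y) y = 2 * c * (Wu Af y * Wvb g y + Af y * Wu (Wvb g) y)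
        - Wu (Wv (Wvb g)) y :=
      Wg_L2 2 c (dAt hAf hy) (dAt oP hy) (dAt oVP hy)
    rw [h, Wu_Af (dne hy)]
    ring
  have eWuK : Wu (Wu (fun y => 2 * Af y * (c * Wvb g y) - Wv (Wvb g) y)) ((τ, u, v) : ℂ × ℂ × ℂ)
      = 2 * c * (Af ((τ, u, v) : ℂ × ℂ × ℂ) * Wu (Wu (Wvb g)) ((τ, u, v) : ℂ × ℂ × ℂ)) - Wu (Wu (Wv (Wvb g))) ((τ, u, v) : ℂ × ℂ × ℂ) := by
    have h0 : Wu (Wu (fun y => 2 * Af y * (c * Wvb g y) - Wv (Wvb g) y)) ((τ, u, v) : ℂ × ℂ × ℂ) = Wu (fun y => 2 * c * (Af y * Wu (Wvb g) y) - Wu (Wv (Wvb g)) y) ((τ, u, v) : ℂ × ℂ × ℂ) := Wg_congr (evS eKu hx)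
    have h1 : Wu (fun y => 2 * c * (Af y * Wu (Wvb g) y) - Wu (Wv (Wvb g)) y) ((τ, u, v) : ℂ × ℂ × ℂ)
        = 2 * c * (Wu Af ((τ, u, v) : ℂ × ℂ × ℂ) * Wu (Wvb g) ((τ, u, v) : ℂ × ℂ × ℂ) + Af ((τ, u, v) : ℂ × ℂ × ℂ) * Wu (Wu (Wvb g)) ((τ, u, v) : ℂ × ℂ × ℂ))
          - Wu (Wu (Wv (Wvb g))) ((τ, u, v) : ℂ × ℂ × ℂ) :=
      Wg_L4 (2 * c) (dAt hAf hx) (dAt oUP hx) (dAt oUVP hx)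
    rw [h0, h1, Wu_Af (dne hx)]
    ring
  -- put everything together
  rw [hDD, hDDel, hDF τ u v t hx, eH ((τ, u, v) : ℂ × ℂ × ℂ) hx, eWvH, eKt, eWvK, eWuK]
  simp only [Af, Bf]
  obtain ⟨d, hd', hd0⟩ : ∃ d : ℂ, d = τ - (starRingEnd ℂ) τ ∧ d ≠ 0 := ⟨_, rfl, den_ne hτ⟩
  obtain ⟨nn, hnn'⟩ : ∃ nn : ℂ, nn = v - (starRingEnd ℂ) v := ⟨_, rfl⟩
  rw [← hd', ← hnn']
  field_simp [hd0]
  have hcc : d ^ 6 * d⁻¹ ^ 6 = 1 := by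
    rw [inv_pow]
    exact mul_inv_cancel₀ (pow_ne_zero 6 hd0)
  linear_combination (0 : ℂ) * hcc

/-- On functions of degree `m`, one has `[Δ, D] = (8πim/(τ−τ̄)) Δ`. -/
theorem Delta_comm_D (m : ℝ) (hm : 0 < m) (F : ℂ → ℂ → ℂ → ℂ → ℂ)
    (hF : ∀ τ u v t, F τ u v t = Complex.exp (2 * πc * I * m * t) * F τ u v 0)
    (hsm : ContDiff ℝ (⊤ : ℕ∞) (fun p : ℂ × ℂ × ℂ × ℂ => F p.1 p.2.1 p.2.2.1 p.2.2.2))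
    (τ u v t : ℂ) (hτ : 0 < τ.im) :
    DeltaOp (Dop F) τ u v t - Dop (DeltaOp F) τ u v t =
      8 * πc * I * m / (τ - (starRingEnd ℂ) τ) * DeltaOp F τ u v t := by
  have hg : ContDiff ℝ ∞ (fun y : ℂ × ℂ × ℂ => F y.1 y.2.1 y.2.2 0) := by
    have hemb : ContDiff ℝ ∞ (fun y : ℂ × ℂ × ℂ => (y.1, y.2.1, y.2.2, (0 : ℂ))) := by fun_prop
    exact (hsm.of_le (mod_cast le_top)).comp hemb
  have hGF : ∀ τ' u' v' t' : ℂ, F τ' u' v' t'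
      = Complex.exp (2 * πc * I * (m : ℂ) * t')
        * (fun y : ℂ × ℂ × ℂ => F y.1 y.2.1 y.2.2 0) (τ', u', v') :=
    fun τ' u' v' t' => hF τ' u' v' t'
  have h := main_aux (2 * πc * I * (m : ℂ)) (fun y : ℂ × ℂ × ℂ => F y.1 y.2.1 y.2.2 0)
    hg F hGF τ u v t hτ
  rw [h]
  ring
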